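/- Let (X,u) and (Y,v) be closure spaces. The class 𝒞* of all pairs ((f_λ)_{λ∈Λ}, f) such that (f_λ) is a net in Y^X converging continuously to f ∈ Y^X satisfies the axioms: (CONSTANTS) every constant net with value f converges continuously to f; (SUBNETS) if (f_λ) converges continuously to f, then so does every subnet of (f_λ); (DIVERGENCE) if (f_λ) does not converge continuously to f, then there is a subnet (g_μ) of (f_λ) such that no subnet of (g_μ) converges continuously to f. -/

import Mathlib

/-!
(CONSTANTS) and (SUBNETS) hold because convergence of nets is preserved by cofinal reindexing:
the double net of a subnet `F ∘ φ` is the double net of `F` reindexed by `φ × id`.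

For (DIVERGENCE), failure of continuous convergence is witnessed by a net `s → x` and a
neighbourhood `V` of `f x` such that `F l (s m) ∉ V` for a cofinal set `S` of pairs `(l, m)`.
The restriction `G` of `(l, m) ↦ F l` to `S` is the required subnet: if `H = G ∘ ψ` is a subnet
of it, the diagonal `n ↦ H n (s (ψ n).2)` is a subnet of the double net of `H` that never
enters `V`.
-/
open Set

universe u

/-- A Čech closure operator on a type `X`: it satisfies (C1) `cl ∅ = ∅`,
(C2) `A ⊆ cl A` and (C3) `cl (A ∪ B) = cl A ∪ cl B`.  The pair `(X, u)` is a
(Čech) closure space. -/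
structure CechClosure (X : Type u) : Type u where
  cl : Set X → Set X
  cl_empty : cl ∅ = ∅
  subset_cl : ∀ A : Set X, A ⊆ cl A
  cl_union : ∀ A B : Set X, cl (A ∪ B) = cl A ∪ cl B

namespace CechClosure

variable {X Y Z : Type u}

/-- The interior operator of a closure space: `int_u A = X \ u (X \ A)`. -/
def interior (u : CechClosure X) (A : Set X) : Set X := (u.cl Aᶜ)ᶜ

/-- `U` is a neighbourhood of `x` in `(X, u)` if `x ∈ int_u U`. -/
def Nhd (u : CechClosure X) (x : X) (U : Set X) : Prop := x ∈ u.interior U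

theorem interior_subset (u : CechClosure X) (A : Set X) : u.interior A ⊆ A := by
  intro x hx
  by_contra h
  exact hx (u.subset_cl _ h)

theorem interior_inter (u : CechClosure X) (A B : Set X) :
    u.interior (A ∩ B) = u.interior A ∩ u.interior B := by
  unfold interior
  rw [compl_inter, u.cl_union, compl_union]

theorem nhd_univ (u : CechClosure X) (x : X) : u.Nhd x univ := by
  simp [Nhd, interior, u.cl_empty]

theorem nhd_inter (u : CechClosure X) {x : X} {A B : Set X} (hA : u.Nhd x A)
    (hB : u.Nhd x B) : u.Nhd x (A ∩ B) := by
  have h := u.interior_inter A B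
  unfold Nhd at *
  rw [h]
  exact ⟨hA, hB⟩

/-- A function `f : (X, u) → (Y, v)` between closure spaces is continuous if
`f (u A) ⊆ v (f A)` for every `A ⊆ X`. -/
def Continuous (u : CechClosure X) (v : CechClosure Y) (f : X → Y) : Prop :=
  ∀ A : Set X, f '' u.cl A ⊆ v.cl (f '' A)

/-- The product of two closure spaces: `(z, x)` is in the closure of `S` iff every
"rectangle" `W ×ˢ U` of neighbourhoods `W` of `z` and `U` of `x` meets `S`. -/
def prod (w : CechClosure Z) (u : CechClosure X) : CechClosure (Z × X) where
  cl S := {p | ∀ W U, w.Nhd p.1 W → u.Nhd p.2 U → (W ×ˢ U ∩ S).Nonempty}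
  cl_empty := by
    ext p
    simp only [mem_setOf_eq, mem_empty_iff_false, iff_false]
    intro h
    rcases h univ univ (w.nhd_univ _) (u.nhd_univ _) with ⟨q, -, hq⟩
    exact hq
  subset_cl := by
    intro S p hp W U hW hU
    exact ⟨p, ⟨⟨w.interior_subset _ hW, u.interior_subset _ hU⟩, hp⟩⟩
  cl_union := by
    intro S T
    ext p
    simp only [mem_setOf_eq, mem_union]
    constructor
    · intro h
      by_contra hc
      push_neg at hc
      obtain ⟨h1, h2⟩ := hc
      simp only [← Set.not_nonempty_iff_eq_empty] at h1 h2
      obtain ⟨W1, U1, hW1, hU1, hne1⟩ := h1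
      obtain ⟨W2, U2, hW2, hU2, hne2⟩ := h2
      rcases h (W1 ∩ W2) (U1 ∩ U2) (w.nhd_inter hW1 hW2) (u.nhd_inter hU1 hU2) with
        ⟨q, ⟨⟨hq1, hq2⟩, hqST⟩⟩
      rcases hqST with hqS | hqT
      · exact hne1 ⟨q, ⟨⟨hq1.1, hq2.1⟩, hqS⟩⟩
      · exact hne2 ⟨q, ⟨⟨hq1.2, hq2.2⟩, hqT⟩⟩
    · rintro (h | h) W U hW hU
      · rcases h W U hW hU with ⟨q, hq1, hq2⟩
        exact ⟨q, hq1, Or.inl hq2⟩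
      · rcases h W U hW hU with ⟨q, hq1, hq2⟩
        exact ⟨q, hq1, Or.inr hq2⟩

/-- `Y^X`: the type of continuous functions between the closure spaces
`(X, u)` and `(Y, v)`. -/
def ContMap (u : CechClosure X) (v : CechClosure Y) : Type u :=
  {f : X → Y // Continuous u v f}

/-- A closure operator `σ` on `Y^X` is proper (splitting) if for every closure space
`(Z, w)`, continuity of `g : (Z, w) × (X, u) → (Y, v)` implies continuity of
`g* : (Z, w) → (Y^X, σ)`, where `g (z, x) = (g* z) x`. -/
def Proper (u : CechClosure X) (v : CechClosure Y) (σ : CechClosure (ContMap u v)) : Prop :=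
  ∀ (Z : Type u) (w : CechClosure Z) (G : Z → ContMap u v),
    Continuous (w.prod u) v (fun p => (G p.1).1 p.2) → Continuous w σ G

/-- A closure operator `σ` on `Y^X` is admissible (jointly continuous) if for every closure
space `(Z, w)`, continuity of `g* : (Z, w) → (Y^X, σ)` implies continuity of
`g : (Z, w) × (X, u) → (Y, v)`, where `g (z, x) = (g* z) x`. -/
def Admissible (u : CechClosure X) (v : CechClosure Y) (σ : CechClosure (ContMap u v)) : Prop :=
  ∀ (Z : Type u) (w : CechClosure Z) (G : Z → ContMap u v),
    Continuous w σ G → Continuous (w.prod u) v (fun p => (G p.1).1 p.2)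

/-- A topological space regarded as a closure space via its (Kuratowski) closure operator. -/
def ofTop {Z : Type u} (t : TopologicalSpace Z) : CechClosure Z :=
  letI := t
  { cl := fun A => _root_.closure A
    cl_empty := closure_empty
    subset_cl := fun _ => subset_closure
    cl_union := fun _ _ => closure_union }

/-- `le` is the order relation of a directed set: a reflexive and transitive relation on a
nonempty type in which every two elements have an upper bound. -/
structure IsDirectedOrder {Λ : Type*} (le : Λ → Λ → Prop) : Prop where
  refl : ∀ a, le a a
  trans : ∀ a b c, le a b → le b c → le a c
  directed : ∀ a b, ∃ c, le a c ∧ le b c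
  nonempty : Nonempty Λ

/-- Convergence of a net `s : Λ → X` (with order `le` on `Λ`) to a point `x` in a closure
space `(X, u)`: every neighbourhood of `x` contains `s l` residually. -/
def NetConv (u : CechClosure X) {Λ : Type*} (le : Λ → Λ → Prop) (s : Λ → X) (x : X) : Prop :=
  ∀ U : Set X, u.Nhd x U → ∃ l₀, ∀ l, le l₀ l → s l ∈ U

/-- The product order on `Λ × M`. -/
def prodLE {Λ M : Type*} (leΛ : Λ → Λ → Prop) (leM : M → M → Prop) :
    Λ × M → Λ × M → Prop :=
  fun p q => leΛ p.1 q.1 ∧ leM p.2 q.2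

/-- A net `F : Λ → Y^X` converges continuously to `f ∈ Y^X` if for every `x ∈ X` and every
net `s : M → X` converging to `x` in `(X, u)`, the net `(l, m) ↦ (F l) (s m)` (indexed by
`Λ × M` with the product order) converges to `f x` in `(Y, v)`. -/
def ContConv (u : CechClosure X) (v : CechClosure Y) {Λ : Type u} (leΛ : Λ → Λ → Prop)
    (F : Λ → ContMap u v) (f : ContMap u v) : Prop :=
  ∀ (M : Type u) (leM : M → M → Prop), IsDirectedOrder leM →
    ∀ (s : M → X) (x : X), NetConv u leM s x →
      NetConv v (prodLE leΛ leM) (fun p : Λ × M => (F p.1).1 (s p.2)) (f.1 x)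

/-- The upper limit of a net `A : Λ → Set X` of subsets of a closure space `(X, u)`: the set
of points `x` such that for every `l₀` and every neighbourhood `U` of `x` there is `l ≥ l₀`
with `A l ∩ U ≠ ∅`. -/
def UpperLim (u : CechClosure X) {Λ : Type*} (le : Λ → Λ → Prop) (A : Λ → Set X) : Set X :=
  {x | ∀ (l₀ : Λ) (U : Set X), u.Nhd x U → ∃ l, le l₀ l ∧ (A l ∩ U).Nonempty}

/-- `g : M → α` is a subnet of `f : Λ → α`: there is `φ : M → Λ` with `g = f ∘ φ` such that
`φ` is residually above any given index of `Λ`. -/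
def IsSubnet {α : Type*} {Λ M : Type*} (leΛ : Λ → Λ → Prop) (leM : M → M → Prop)
    (f : Λ → α) (g : M → α) : Prop :=
  ∃ φ : M → Λ, (∀ m, g m = f (φ m)) ∧ ∀ l₀, ∃ m₀, ∀ m, leM m₀ m → leΛ l₀ (φ m)

end CechClosure

namespace CechClosure

section Nets

variable {Λ M N : Type*}

/-- `IsSubnet leΛ leM f g` unfolds to `∃ φ, (∀ m, g m = f (φ m)) ∧ IsCofinalMap leΛ leM φ`. -/
def IsCofinalMap (leΛ : Λ → Λ → Prop) (leM : M → M → Prop) (φ : M → Λ) : Prop :=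
  ∀ l₀, ∃ m₀, ∀ m, leM m₀ m → leΛ l₀ (φ m)

theorem IsCofinalMap.comp {leΛ : Λ → Λ → Prop} {leM : M → M → Prop} {leN : N → N → Prop}
    {φ : M → Λ} {ψ : N → M} (hφ : IsCofinalMap leΛ leM φ) (hψ : IsCofinalMap leM leN ψ) :
    IsCofinalMap leΛ leN (φ ∘ ψ) := by
  intro l₀
  obtain ⟨m₀, hm₀⟩ := hφ l₀
  obtain ⟨n₀, hn₀⟩ := hψ m₀
  exact ⟨n₀, fun n hn => hm₀ _ (hn₀ n hn)⟩

theorem isCofinalMap_fst [Nonempty M] (leΛ : Λ → Λ → Prop) (leM : M → M → Prop) :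
    IsCofinalMap leΛ (prodLE leΛ leM) Prod.fst :=
  fun l₀ => ⟨(l₀, Classical.arbitrary M), fun _ hp => hp.1⟩

theorem IsCofinalMap.prodMap_id {leΛ : Λ → Λ → Prop} {leM : M → M → Prop}
    (leN : N → N → Prop) {φ : M → Λ} (hφ : IsCofinalMap leΛ leM φ) :
    IsCofinalMap (prodLE leΛ leN) (prodLE leM leN) (Prod.map φ id) := by
  rintro ⟨l₀, n₀⟩
  obtain ⟨m₀, hm₀⟩ := hφ l₀
  exact ⟨(m₀, n₀), fun p hp => ⟨hm₀ _ hp.1, hp.2⟩⟩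

theorem isCofinalMap_subtypeVal {le : Λ → Λ → Prop}
    (htrans : ∀ a b c, le a b → le b c → le a c) {S : Set Λ} (hS : ∀ a, ∃ b ∈ S, le a b) :
    IsCofinalMap le (fun a b : S => le a b) Subtype.val := by
  intro a₀
  obtain ⟨b, hbS, hab⟩ := hS a₀
  exact ⟨⟨b, hbS⟩, fun c hbc => htrans _ _ _ hab hbc⟩

theorem IsCofinalMap.diag [Nonempty Λ] {leΛ : Λ → Λ → Prop} {leM : M → M → Prop}
    {leN : N → N → Prop} (hN : IsDirectedOrder leN)
    {ψ : N → Λ × M} (hψ : IsCofinalMap (prodLE leΛ leM) leN ψ) :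
    IsCofinalMap (prodLE leN leM) leN (fun n => (n, (ψ n).2)) := by
  rintro ⟨n₀, m₀⟩
  obtain ⟨n₁, hn₁⟩ := hψ (Classical.arbitrary Λ, m₀)
  obtain ⟨n₂, hn₀₂, hn₁₂⟩ := hN.directed n₀ n₁
  exact ⟨n₂, fun n hn =>
    ⟨hN.trans _ _ _ hn₀₂ hn, (hn₁ n (hN.trans _ _ _ hn₁₂ hn)).2⟩⟩

theorem IsDirectedOrder.prodLE {leΛ : Λ → Λ → Prop} {leM : M → M → Prop}
    (hΛ : IsDirectedOrder leΛ) (hM : IsDirectedOrder leM) :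
    IsDirectedOrder (prodLE leΛ leM) where
  refl p := ⟨hΛ.refl _, hM.refl _⟩
  trans _ _ _ h₁ h₂ := ⟨hΛ.trans _ _ _ h₁.1 h₂.1, hM.trans _ _ _ h₁.2 h₂.2⟩
  directed a b := by
    obtain ⟨l, hal, hbl⟩ := hΛ.directed a.1 b.1
    obtain ⟨m, ham, hbm⟩ := hM.directed a.2 b.2
    exact ⟨(l, m), ⟨hal, ham⟩, ⟨hbl, hbm⟩⟩
  nonempty := ⟨(hΛ.nonempty.some, hM.nonempty.some)⟩

theorem IsDirectedOrder.restrict {le : Λ → Λ → Prop} (h : IsDirectedOrder le) {S : Set Λ}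
    (hS : ∀ a, ∃ b ∈ S, le a b) : IsDirectedOrder (fun a b : S => le a b) where
  refl a := h.refl a
  trans _ _ _ := h.trans _ _ _
  directed a b := by
    obtain ⟨c, hac, hbc⟩ := h.directed a b
    obtain ⟨d, hdS, hcd⟩ := hS c
    exact ⟨⟨d, hdS⟩, h.trans _ _ _ hac hcd, h.trans _ _ _ hbc hcd⟩
  nonempty := by
    obtain ⟨b, hbS, -⟩ := hS h.nonempty.some
    exact ⟨⟨b, hbS⟩⟩

end Nets

variable {X Y : Type u}

theorem cl_mono (u : CechClosure X) {A B : Set X} (h : A ⊆ B) : u.cl A ⊆ u.cl B := by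
  rw [← union_eq_self_of_subset_left h, u.cl_union]
  exact subset_union_left

theorem Continuous.nhd_preimage {u : CechClosure X} {v : CechClosure Y} {f : X → Y}
    (hf : Continuous u v f) {x : X} {V : Set Y} (hV : v.Nhd (f x) V) :
    u.Nhd x (f ⁻¹' V) := by
  intro hx
  rw [← preimage_compl] at hx
  exact hV (v.cl_mono (image_preimage_subset f Vᶜ) (hf _ ⟨x, hx, rfl⟩))

theorem NetConv.comp {Λ M : Type*} {u : CechClosure X} {leΛ : Λ → Λ → Prop}
    {leM : M → M → Prop} {s : Λ → X} {x : X} (hs : NetConv u leΛ s x) {φ : M → Λ}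
    (hφ : IsCofinalMap leΛ leM φ) : NetConv u leM (s ∘ φ) x := by
  intro U hU
  obtain ⟨l₀, hl₀⟩ := hs U hU
  obtain ⟨m₀, hm₀⟩ := hφ l₀
  exact ⟨m₀, fun m hm => hl₀ _ (hm₀ m hm)⟩

section ContinuousConvergence

variable {u : CechClosure X} {v : CechClosure Y}

theorem contConv_const {Λ : Type u} [Nonempty Λ] (leΛ : Λ → Λ → Prop) (f : ContMap u v) :
    ContConv u v leΛ (fun _ : Λ => f) f := by
  intro M leM _ s x hs V hV
  obtain ⟨m₀, hm₀⟩ := hs _ (f.2.nhd_preimage hV)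
  exact ⟨(Classical.arbitrary Λ, m₀), fun p hp => hm₀ p.2 hp.2⟩

theorem ContConv.subnet {Λ M : Type u} {leΛ : Λ → Λ → Prop} {leM : M → M → Prop}
    {F : Λ → ContMap u v} {f : ContMap u v} (hF : ContConv u v leΛ F f) {G : M → ContMap u v}
    (hG : IsSubnet leΛ leM F G) : ContConv u v leM G f := by
  obtain ⟨φ, hGF, hφ⟩ := hG
  intro K leK hK s x hs
  have h := (hF K leK hK s x hs).comp (IsCofinalMap.prodMap_id leK hφ)
  simpa only [Function.comp_def, Prod.map_fst, Prod.map_snd, id, ← hGF] using h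

theorem exists_frequently_not_mem_of_not_contConv {Λ : Type u} {leΛ : Λ → Λ → Prop}
    {F : Λ → ContMap u v} {f : ContMap u v} (hF : ¬ContConv u v leΛ F f) :
    ∃ (M : Type u) (leM : M → M → Prop), IsDirectedOrder leM ∧
      ∃ (s : M → X) (x : X), NetConv u leM s x ∧ ∃ V : Set Y, v.Nhd (f.1 x) V ∧
        ∀ r, ∃ p ∈ {p : Λ × M | (F p.1).1 (s p.2) ∉ V}, prodLE leΛ leM r p := by
  simp only [ContConv, NetConv, not_forall, not_exists] at hF
  obtain ⟨M, leM, hM, s, x, hs, V, hV, hfreq⟩ := hF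
  refine ⟨M, leM, hM, s, x, hs, V, hV, fun r => ?_⟩
  obtain ⟨p, hrp, hp⟩ := hfreq r
  exact ⟨p, hp, hrp⟩

theorem not_contConv_of_isSubnet_restrict {Λ M N : Type u} {leΛ : Λ → Λ → Prop}
    {leM : M → M → Prop} {leN : N → N → Prop} (hΛ : IsDirectedOrder leΛ)
    (hM : IsDirectedOrder leM) (hN : IsDirectedOrder leN) {F : Λ → ContMap u v} {f : ContMap u v} {s : M → X} {x : X}
    (hs : NetConv u leM s x) {V : Set Y} (hV : v.Nhd (f.1 x) V)
    (hS : ∀ r, ∃ p ∈ {p : Λ × M | (F p.1).1 (s p.2) ∉ V}, prodLE leΛ leM r p)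
    {H : N → ContMap u v}
    (hH : IsSubnet (fun a b : {p : Λ × M | (F p.1).1 (s p.2) ∉ V} => prodLE leΛ leM a b) leN
      (fun p => F p.1.1) H) :
    ¬ContConv u v leN H f := by
  intro hconv
  have := hΛ.nonempty
  obtain ⟨ψ, hHG, hψ⟩ := hH
  have hψS : IsCofinalMap (prodLE leΛ leM) leN (Subtype.val ∘ ψ) :=
    (isCofinalMap_subtypeVal ((hΛ.prodLE hM).trans) hS).comp hψ
  have hdiag := (hconv M leM hM s x hs).comp (hψS.diag hN)
  obtain ⟨n₀, hn₀⟩ := hdiag V hV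
  have hmem : (H n₀).1 (s (ψ n₀).1.2) ∈ V := hn₀ n₀ (hN.refl n₀)
  rw [hHG n₀] at hmem
  exact (ψ n₀).2 hmem

theorem exists_isSubnet_forall_isSubnet_not_contConv {Λ : Type u} {leΛ : Λ → Λ → Prop}
    (hΛ : IsDirectedOrder leΛ) {F : Λ → ContMap u v} {f : ContMap u v}
    (hF : ¬ContConv u v leΛ F f) :
    ∃ (M : Type u) (leM : M → M → Prop), IsDirectedOrder leM ∧
      ∃ G : M → ContMap u v, IsSubnet leΛ leM F G ∧
        ∀ (N : Type u) (leN : N → N → Prop), IsDirectedOrder leN →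
          ∀ H : N → ContMap u v, IsSubnet leM leN G H → ¬ContConv u v leN H f := by
  obtain ⟨M, leM, hM, s, x, hs, V, hV, hS⟩ := exists_frequently_not_mem_of_not_contConv hF
  have := hM.nonempty
  have hG : IsCofinalMap leΛ _ (Prod.fst ∘ Subtype.val) :=
    (isCofinalMap_fst leΛ leM).comp (isCofinalMap_subtypeVal (hΛ.prodLE hM).trans hS)
  exact ⟨_, _, (hΛ.prodLE hM).restrict hS, fun p => F p.1.1, ⟨_, fun _ => rfl, hG⟩,
    fun N leN hN H hH => not_contConv_of_isSubnet_restrict hΛ hM hN hs hV hS hH⟩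

end ContinuousConvergence

/-- The class `𝒞*` of continuously convergent nets in `Y^X` satisfies (CONSTANTS),
(SUBNETS) and (DIVERGENCE). -/
theorem contConv_constants_subnets_divergence (u : CechClosure X) (v : CechClosure Y) :
    -- (CONSTANTS): every constant net with value `f` converges continuously to `f`.
    (∀ (Λ : Type u) (leΛ : Λ → Λ → Prop), IsDirectedOrder leΛ →
      ∀ f : ContMap u v, ContConv u v leΛ (fun _ : Λ => f) f) ∧
    -- (SUBNETS): if a net converges continuously to `f`, so does each of its subnets.
    (∀ (Λ : Type u) (leΛ : Λ → Λ → Prop), IsDirectedOrder leΛ →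
      ∀ (F : Λ → ContMap u v) (f : ContMap u v), ContConv u v leΛ F f →
        ∀ (M : Type u) (leM : M → M → Prop), IsDirectedOrder leM →
          ∀ G : M → ContMap u v, IsSubnet leΛ leM F G → ContConv u v leM G f) ∧
    -- (DIVERGENCE): if a net does not converge continuously to `f`, it has a subnet no
    -- subnet of which converges continuously to `f`.
    (∀ (Λ : Type u) (leΛ : Λ → Λ → Prop), IsDirectedOrder leΛ →
      ∀ (F : Λ → ContMap u v) (f : ContMap u v), ¬ContConv u v leΛ F f →
        ∃ (M : Type u) (leM : M → M → Prop), IsDirectedOrder leM ∧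
          ∃ G : M → ContMap u v, IsSubnet leΛ leM F G ∧
            ∀ (N : Type u) (leN : N → N → Prop), IsDirectedOrder leN →
              ∀ H : N → ContMap u v, IsSubnet leM leN G H →
                ¬ContConv u v leN H f) :=
  ⟨fun _ leΛ hΛ f => have := hΛ.nonempty; contConv_const leΛ f,
    fun _ _ _ _ _ hF _ _ _ _ hG => hF.subnet hG,
    fun _ _ hΛ _ _ hF => exists_isSubnet_forall_isSubnet_not_contConv hΛ hF⟩

end CechClosure
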